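/- Let F: Λ → ℝ^d be continuous, f = F∘Π, let I be the set of parabolic fixed points of T and A the convex hull of {F(x) : x ∈ I}. Let {n_j} be a subsequence of ℕ and ω ∈ Σ. If lim_{j→∞} A_{n_j} g(ω) = 0 and lim_{j→∞} A_{n_j} f(ω) exists, then this limit lies in A. In particular, if liminf_{n→∞} A_n g(ω) = 0 and lim_{n→∞} A_n f(ω) exists, then lim_{n→∞} A_n f(ω) ∈ A. -/

import Mathlib

open MeasureTheory Set Filter Topology

noncomputable section

/-- A finite measurable partition of the space. -/
def IsMeasPartition {X : Type*} [MeasurableSpace X] (P : Finset (Set X)) : Prop :=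
  (∀ s ∈ P, MeasurableSet s) ∧ ((P : Set (Set X)).PairwiseDisjoint id) ∧ (⋃ s ∈ P, s) = univ

/-- Shannon entropy of the refinement `⋁_{i<n} T^{-i} P` of a finite partition `P`
under the first `n` iterates of `T`, with respect to the measure `μ`. -/
def partEntropy {X : Type*} [MeasurableSpace X] (T : X → X) (μ : Measure X)
    (P : Finset (Set X)) (n : ℕ) : ℝ :=
  ∑ c : Fin n → {s // s ∈ P},
    Real.negMulLog (μ (⋂ i : Fin n, T^[(i : ℕ)] ⁻¹' ((c i : Set X)))).toReal

/-- The Kolmogorov–Sinai (metric) entropy of the measure `μ` for the map `T`: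
the supremum over finite measurable partitions `P` of
`lim_n (1/n) H(⋁_{i<n} T^{-i}P)`, the limit being computed as an infimum (by
subadditivity of the entropy sequence). -/
def metricEntropy {X : Type*} [MeasurableSpace X] (T : X → X) (μ : Measure X) : ℝ :=
  ⨆ P : {P : Finset (Set X) // IsMeasPartition P},
    ⨅ n : ℕ, partEntropy T μ (P : Finset (Set X)) (n + 1) / (n + 1)

/-- Birkhoff (ergodic) average `A_n f(x) = (1/n) ∑_{j<n} f(T^j x)`. -/
def birkhoff {X E : Type*} [AddCommMonoid E] [Module ℝ E]
    (T : X → X) (f : X → E) (n : ℕ) (x : X) : E :=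
  (n : ℝ)⁻¹ • ∑ j ∈ Finset.range n, f (T^[j] x)

/-- The full shift space `Σ = {1,…,m}^ℕ`. -/
abbrev SymbSp (m : ℕ) := ℕ → Fin m

/-- The shift map `σ` on `Σ`. -/
def shift {m : ℕ} (ω : SymbSp m) : SymbSp m := fun n => ω (n + 1)

/-- The set `M(Σ,σ)` of shift-invariant Borel probability measures on `Σ`. -/
def shiftInvMeasures (m : ℕ) : Set (Measure (SymbSp m)) :=
  {μ | IsProbabilityMeasure μ ∧ μ.map shift = μ}

/-- The level set `X_α = {ω ∈ Σ : lim_n A_n f(ω) = α}` of a potential `f` on `Σ`. -/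
def symbLevelSet {m : ℕ} {E : Type*} [AddCommMonoid E] [Module ℝ E] [TopologicalSpace E]
    (f : SymbSp m → E) (α : E) : Set (SymbSp m) :=
  {ω | Tendsto (fun n => birkhoff shift f n ω) atTop (𝓝 α)}

/-- A piecewise `C¹` expanding (possibly non-uniformly hyperbolic) interval map:
`m` pairwise non-overlapping subintervals `I 1, …, I m` of `[0,1]`, a map `T` which
restricted to each `I i` is a `C¹` surjection onto `[0,1]` (with derivative `T'`),
a unique fixed point `fixPt i` of `T` in each `I i`, and `T' > 1` away from the
fixed points. -/
structure PCSystem (m : ℕ) where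
  hm : 0 < m
  I : Fin m → Set ℝ
  T : ℝ → ℝ
  T' : ℝ → ℝ
  fixPt : Fin m → ℝ
  hI : ∀ i, ∃ a b : ℝ, a < b ∧ I i = Icc a b
  hIsub : ∀ i, I i ⊆ Icc 0 1
  hdisj : ∀ i j, i ≠ j → Disjoint (interior (I i)) (interior (I j))
  hTmeas : Measurable T
  hT'meas : Measurable T'
  hmapsto : ∀ i, MapsTo T (I i) (Icc 0 1)
  hsurj : ∀ i, SurjOn T (I i) (Icc 0 1)
  hderiv : ∀ i, ∀ x ∈ I i, HasDerivWithinAt T (T' x) (I i) x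
  hT'cont : ∀ i, ContinuousOn T' (I i)
  hfixmem : ∀ i, fixPt i ∈ I i
  hfix : ∀ i, T (fixPt i) = fixPt i
  hfixuniq : ∀ i, ∀ y ∈ I i, T y = y → y = fixPt i
  hexp : ∀ y ∈ ⋃ i, I i, y ∉ range fixPt → 1 < T' y

namespace PCSystem

variable {m : ℕ} (S : PCSystem m)

/-- The attractor `Λ = {x ∈ ⋃ I_i : T^n x ∈ [0,1] for all n}`. -/
def attractor : Set ℝ :=
  {x | (x ∈ ⋃ i, S.I i) ∧ ∀ n : ℕ, S.T^[n] x ∈ Icc (0:ℝ) 1}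

/-- The basic interval `I_w = T_{w₁}∘⋯∘T_{wₙ}([0,1])` coded by the word `w`,
described via the forward map: `I_{i·w} = I_i ∩ T⁻¹(I_w)`. -/
def cyl (S : PCSystem m) : List (Fin m) → Set ℝ
  | [] => Icc 0 1
  | i :: w => S.I i ∩ S.T ⁻¹' (cyl S w)

end PCSystem

/-- The word `ω₁…ωₙ` of the first `n` symbols of `ω`. -/
def word {m : ℕ} (ω : SymbSp m) (n : ℕ) : List (Fin m) := List.ofFn fun j : Fin n => ω j

namespace PCSystem

variable {m : ℕ} (S : PCSystem m)

/-- The coding map `Π : Σ → Λ`, `Π(ω) = lim_n T_{ω₁}∘⋯∘T_{ωₙ}([0,1])`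
(realized as the supremum of the nested intersection `⋂_n I_{ω|_n}`, which is
a single point). -/
def code (ω : SymbSp m) : ℝ := sSup (⋂ n : ℕ, S.cyl (word ω n))

/-- The geometric potential `g(ω) = −log T'_{ω₁}(Π(σω)) = log T'(Π(ω))`. -/
def g (ω : SymbSp m) : ℝ := Real.log (S.T' (S.code ω))

/-- `Σ̃ = {ω : liminf_n A_n g(ω) > 0}`. -/
def SigmaTilde : Set (SymbSp m) :=
  {ω | 0 < atTop.liminf fun n => birkhoff shift S.g n ω}

/-- The set `M(Λ,T)` of `T`-invariant Borel probability measures on the attractor `Λ`. -/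
def invMeasures : Set (Measure ℝ) :=
  {μ | IsProbabilityMeasure μ ∧ μ.map S.T = μ ∧ μ S.attractorᶜ = 0}

/-- Lyapunov exponent `λ(μ,T) = ∫ log|T'| dμ` of a measure on the attractor. -/
def lyap (μ : Measure ℝ) : ℝ := ∫ x, Real.log |S.T' x| ∂μ

/-- Lyapunov exponent `λ(μ,σ) = ∫ g dμ` of a measure on the shift space. -/
def lyapSymb (μ : Measure (SymbSp m)) : ℝ := ∫ ω, S.g ω ∂μ

/-- The set of parabolic fixed points, i.e. those fixed points `x_j` with `T'(x_j) = 1`. -/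
def parabolicSet : Set ℝ := {y | ∃ i, y = S.fixPt i ∧ S.T' y = 1}

/-- The level set `Λ_α = {x ∈ Λ : lim_n (1/n)∑_{j<n} F(T^j x) = α}`. -/
def levelSet {E : Type*} [AddCommMonoid E] [Module ℝ E] [TopologicalSpace E]
    (F : ℝ → E) (α : E) : Set ℝ :=
  {x | x ∈ S.attractor ∧ Tendsto (fun n => birkhoff S.T F n x) atTop (𝓝 α)}

/-- `Λ̃`: the set of points of the attractor having exactly two codings. -/
def doubleCoded : Set ℝ := {x | x ∈ S.attractor ∧ (S.code ⁻¹' {x}).ncard = 2}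

end PCSystem

/-! If `ℓ(β) > u` for a linear functional `ℓ` with `ℓ < u` on the convex hull of the
`F`-images of the parabolic points, then by continuity `ℓ ∘ F < u` near the parabolic
points, while away from them `log T'` is bounded below by a positive constant on the compact
set of points whose orbit stays in `⋃ Iᵢ`. Hence `ℓ ∘ F ≤ u + b · log T'` on that set for some
`b`, and averaging along the orbit of `Π ω` gives `ℓ(β) ≤ u + b · 0`. -/

section BirkhoffAverage

variable {α : Type*} {f : α → α} {x : α}

lemma birkhoffAverage_le_birkhoffAverage {φ ψ : α → ℝ} {n : ℕ}
    (h : ∀ k < n, φ (f^[k] x) ≤ ψ (f^[k] x)) :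
    birkhoffAverage ℝ f φ n x ≤ birkhoffAverage ℝ f ψ n x := by
  simp only [birkhoffAverage, birkhoffSum, smul_eq_mul]
  gcongr with k hk
  exact h k (Finset.mem_range.1 hk)

lemma birkhoffAverage_const_add_mul (a b : ℝ) (ψ : α → ℝ) {n : ℕ} (hn : n ≠ 0) :
    birkhoffAverage ℝ f (fun y => a + b * ψ y) n x = a + b * birkhoffAverage ℝ f ψ n x := by
  simp only [birkhoffAverage, birkhoffSum, smul_eq_mul, Finset.sum_add_distrib,
    ← Finset.mul_sum, Finset.sum_const, Finset.card_range, nsmul_eq_mul]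
  field_simp

lemma le_of_tendsto_birkhoffAverage {φ ψ : α → ℝ} {a b c : ℝ}
    (hle : ∀ k, φ (f^[k] x) ≤ a + b * ψ (f^[k] x)) {n : ℕ → ℕ} (hn : Tendsto n atTop atTop)
    (hψ : Tendsto (fun j => birkhoffAverage ℝ f ψ (n j) x) atTop (𝓝 0))
    (hφ : Tendsto (fun j => birkhoffAverage ℝ f φ (n j) x) atTop (𝓝 c)) : c ≤ a := by
  have hlim : Tendsto (fun j => a + b * birkhoffAverage ℝ f ψ (n j) x) atTop (𝓝 a) := by
    simpa using tendsto_const_nhds.add (hψ.const_mul b)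
  refine le_of_tendsto_of_tendsto hφ hlim ?_
  filter_upwards [hn.eventually_ne_atTop 0] with j hj
  rw [← birkhoffAverage_const_add_mul a b ψ hj]
  exact birkhoffAverage_le_birkhoffAverage fun k _ => hle k

lemma abs_birkhoffAverage_le {ψ : α → ℝ} {C : ℝ} (hC : ∀ k, |ψ (f^[k] x)| ≤ C) {n : ℕ}
    (hn : n ≠ 0) : |birkhoffAverage ℝ f ψ n x| ≤ C := by
  have hconst (c : ℝ) : birkhoffAverage ℝ f (fun _ => c) n x = c := by
    rw [birkhoffAverage_of_comp_eq ℝ rfl (Nat.cast_ne_zero.2 hn)]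
  rw [abs_le]
  constructor
  · calc -C = birkhoffAverage ℝ f (fun _ => -C) n x := (hconst _).symm
      _ ≤ _ := birkhoffAverage_le_birkhoffAverage fun k _ => neg_le_of_abs_le (hC k)
  · calc birkhoffAverage ℝ f ψ n x ≤ birkhoffAverage ℝ f (fun _ => C) n x :=
          birkhoffAverage_le_birkhoffAverage fun k _ => le_of_abs_le (hC k)
      _ = C := hconst C

lemma exists_tendsto_birkhoffAverage_liminf {ψ : α → ℝ} {C : ℝ}
    (hC : ∀ k, |ψ (f^[k] x)| ≤ C) :
    ∃ n : ℕ → ℕ, Tendsto n atTop atTop ∧ Tendsto (fun j => birkhoffAverage ℝ f ψ (n j) x)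
      atTop (𝓝 (atTop.liminf fun N => birkhoffAverage ℝ f ψ N x)) := by
  have hbdd : ∀ᶠ N in atTop, |birkhoffAverage ℝ f ψ N x| ≤ C := by
    filter_upwards [eventually_ne_atTop 0] with N hN
    exact abs_birkhoffAverage_le hC hN
  obtain ⟨n, hlim, hn⟩ := exists_seq_tendsto_liminf
    (isCoboundedUnder_ge_of_eventually_le atTop (hbdd.mono fun _ h => le_of_abs_le h))
    (isBoundedUnder_of_eventually_ge (hbdd.mono fun _ h => neg_le_of_abs_le h))
  exact ⟨n, hn, hlim⟩

end BirkhoffAverage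

lemma IsCompact.exists_le_add_mul_of_lt_of_eq_zero {Y : Type*} [TopologicalSpace Y]
    {K : Set Y} (hK : IsCompact K) {φ ψ : Y → ℝ} (hφ : ContinuousOn φ K)
    (hψ : ContinuousOn ψ K) (hψ0 : ∀ y ∈ K, 0 ≤ ψ y) {a : ℝ}
    (ha : ∀ y ∈ K, ψ y = 0 → φ y < a) : ∃ b, ∀ y ∈ K, φ y ≤ a + b * ψ y := by
  set V := K ∩ φ ⁻¹' Ici a
  rcases V.eq_empty_or_nonempty with hVe | hVne
  · refine ⟨0, fun y hy => ?_⟩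
    have hyV : y ∉ V := hVe ▸ notMem_empty y
    simp only [V, mem_inter_iff, mem_preimage, mem_Ici, not_and, not_le] at hyV
    simpa using (hyV hy).le
  obtain ⟨z, ⟨hzK, hza : a ≤ φ z⟩, hzmin⟩ :=
    (hφ.upperSemicontinuousOn.isCompact_inter_preimage_Ici hK a).exists_isMinOn hVne
      (hψ.mono inter_subset_left)
  obtain ⟨M, hM⟩ := hK.bddAbove_image hφ
  have hz : 0 < ψ z := (hψ0 z hzK).lt_of_ne' fun h => (ha z hzK h).not_ge hza
  have hb : 0 ≤ (M - a) / ψ z := div_nonneg (by linarith [hM (mem_image_of_mem φ hzK)]) hz.le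
  refine ⟨(M - a) / ψ z, fun y hy => ?_⟩
  rcases lt_or_ge (φ y) a with hya | hya
  · nlinarith [hψ0 y hy]
  · calc φ y ≤ M := hM (mem_image_of_mem φ hy)
      _ = a + (M - a) / ψ z * ψ z := by field_simp; ring
      _ ≤ a + (M - a) / ψ z * ψ y := by gcongr; exact hzmin ⟨hy, hya⟩

theorem mem_convexHull_of_tendsto_birkhoffAverage {α Y E : Type*} [TopologicalSpace Y]
    [AddCommGroup E] [TopologicalSpace E] [Module ℝ E] [IsTopologicalAddGroup E]
    [ContinuousSMul ℝ E] [LocallyConvexSpace ℝ E] {f : α → α} {x : α} {π : α → Y}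
    {K : Set Y} (hK : IsCompact K) (horb : ∀ k, π (f^[k] x) ∈ K) {ψ : Y → ℝ} {F : Y → E}
    (hψ : ContinuousOn ψ K) (hF : ContinuousOn F K) (hψ0 : ∀ y ∈ K, 0 ≤ ψ y)
    (hC : IsClosed (convexHull ℝ (F '' {y ∈ K | ψ y = 0}))) {n : ℕ → ℕ}
    (hn : Tendsto n atTop atTop) {β : E}
    (hψn : Tendsto (fun j => birkhoffAverage ℝ f (ψ ∘ π) (n j) x) atTop (𝓝 0))
    (hFn : Tendsto (fun j => birkhoffAverage ℝ f (F ∘ π) (n j) x) atTop (𝓝 β)) :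
    β ∈ convexHull ℝ (F '' {y ∈ K | ψ y = 0}) := by
  by_contra hβ
  obtain ⟨ℓ, u, hℓC, huβ⟩ := geometric_hahn_banach_closed_point (convex_convexHull ℝ _) hC hβ
  obtain ⟨b, hb⟩ := hK.exists_le_add_mul_of_lt_of_eq_zero (ℓ.continuous.comp_continuousOn hF)
    hψ hψ0 fun y hy hy0 => hℓC _ (subset_convexHull ℝ _ (mem_image_of_mem F ⟨hy, hy0⟩))
  have hℓn : Tendsto (fun j => birkhoffAverage ℝ f (ℓ ∘ F ∘ π) (n j) x) atTop (𝓝 (ℓ β)) := by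
    refine ((ℓ.continuous.tendsto β).comp hFn).congr fun j => ?_
    exact map_birkhoffAverage ℝ ℝ ℓ f _ _ x
  exact huβ.not_ge
    (le_of_tendsto_birkhoffAverage (fun k => hb (π (f^[k] x)) (horb k)) hn hψn hℓn)

namespace PCSystem

variable {m : ℕ} (S : PCSystem m)

def domain : Set ℝ := ⋃ i, S.I i

/-- The points whose whole forward orbit stays in `⋃ Iᵢ`; unlike the attractor, this set is
compact, since `T` may behave arbitrarily off `⋃ Iᵢ`. -/
def trappedSet : Set ℝ := {x | ∀ k, S.T^[k] x ∈ S.domain}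

lemma isClosed_I (i : Fin m) : IsClosed (S.I i) := by
  obtain ⟨a, b, -, h⟩ := S.hI i
  exact h ▸ isClosed_Icc

lemma continuousOn_T (i : Fin m) : ContinuousOn S.T (S.I i) :=
  fun x hx => (S.hderiv i x hx).continuousWithinAt

lemma continuousOn_T' : ContinuousOn S.T' S.domain :=
  (locallyFinite_of_finite _).continuousOn_iUnion S.isClosed_I S.hT'cont

lemma domain_subset_Icc : S.domain ⊆ Icc 0 1 := iUnion_subset S.hIsub

lemma isClosed_domain_inter_preimage {C : Set ℝ} (hC : IsClosed C) :
    IsClosed (S.domain ∩ S.T ⁻¹' C) := by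
  rw [domain, iUnion_inter]
  exact isClosed_iUnion_of_finite fun i =>
    (S.continuousOn_T i).preimage_isClosed_of_isClosed (S.isClosed_I i) hC

lemma isClosed_setOf_forall_lt_iterate_mem (n : ℕ) :
    IsClosed {x | ∀ k < n, S.T^[k] x ∈ S.domain} := by
  induction n with
  | zero => simp
  | succ n ih =>
    convert S.isClosed_domain_inter_preimage ih using 1
    ext x
    simp only [Nat.forall_lt_succ_left, Function.iterate_succ_apply, mem_ofPred_eq,
      mem_inter_iff, mem_preimage, Function.iterate_zero_apply]

lemma isCompact_trappedSet : IsCompact S.trappedSet := by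
  have hclosed : IsClosed S.trappedSet := by
    convert isClosed_iInter S.isClosed_setOf_forall_lt_iterate_mem using 1
    ext x
    simp only [trappedSet, mem_ofPred_eq, mem_iInter]
    exact ⟨fun h n k _ => h k, fun h k => h (k + 1) k k.lt_succ_self⟩
  exact isCompact_Icc.of_isClosed_subset hclosed fun x hx => S.domain_subset_Icc (hx 0)

lemma trappedSet_subset_domain : S.trappedSet ⊆ S.domain := fun _ hx => hx 0

lemma trappedSet_subset_attractor : S.trappedSet ⊆ S.attractor :=
  fun _ hx => ⟨hx 0, fun n => S.domain_subset_Icc (hx n)⟩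

lemma fixPt_mem_trappedSet (i : Fin m) : S.fixPt i ∈ S.trappedSet := fun k => by
  rw [Function.iterate_fixed (S.hfix i)]
  exact mem_iUnion.2 ⟨i, S.hfixmem i⟩

lemma cyl_subset_Icc : ∀ w, S.cyl w ⊆ Icc 0 1
  | [] => subset_rfl
  | i :: _ => inter_subset_left.trans (S.hIsub i)

lemma isClosed_cyl : ∀ w, IsClosed (S.cyl w)
  | [] => isClosed_Icc
  | i :: w =>
    (S.continuousOn_T i).preimage_isClosed_of_isClosed (S.isClosed_I i) (isClosed_cyl w)

lemma cyl_nonempty : ∀ w, (S.cyl w).Nonempty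
  | [] => nonempty_Icc.2 zero_le_one
  | i :: w => by
    obtain ⟨y, hy⟩ := cyl_nonempty w
    obtain ⟨x, hx, rfl⟩ := S.hsurj i (S.cyl_subset_Icc w hy)
    exact ⟨x, hx, hy⟩

lemma cyl_append_subset : ∀ w v, S.cyl (w ++ v) ⊆ S.cyl w
  | [], v => S.cyl_subset_Icc v
  | _ :: w, v => inter_subset_inter_right _ (preimage_mono (cyl_append_subset w v))

lemma cyl_subset_setOf_forall_lt_iterate_mem :
    ∀ w, S.cyl w ⊆ {x | ∀ k < w.length, S.T^[k] x ∈ S.domain}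
  | [] => fun _ _ k hk => absurd hk k.not_lt_zero
  | i :: w => fun _ ⟨hx, hTx⟩ => Nat.forall_lt_succ_left.2
      ⟨mem_iUnion.2 ⟨i, hx⟩, cyl_subset_setOf_forall_lt_iterate_mem w hTx⟩

lemma code_mem_cyl (ω : SymbSp m) (n : ℕ) : S.code ω ∈ S.cyl (word ω n) := by
  have hanti : Antitone fun n => S.cyl (word ω n) := antitone_nat_of_succ_le fun n => by
    simpa only [word, List.ofFn_succ', List.concat_eq_append, Fin.val_castSucc,
      Fin.val_last] using S.cyl_append_subset (word ω n) [ω n]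
  have hne : (⋂ n, S.cyl (word ω n)).Nonempty :=
    IsCompact.nonempty_iInter_of_sequence_nonempty_isCompact_isClosed _
      (fun n => hanti n.le_succ) (fun n => S.cyl_nonempty _) isCompact_Icc
      (fun n => S.isClosed_cyl _)
  have hbdd : BddAbove (⋂ n, S.cyl (word ω n)) :=
    bddAbove_Icc.mono ((iInter_subset _ 0).trans (S.cyl_subset_Icc _))
  exact mem_iInter.1 ((isClosed_iInter fun n => S.isClosed_cyl _).csSup_mem hne hbdd) n

lemma code_mem_trappedSet (ω : SymbSp m) : S.code ω ∈ S.trappedSet := fun k =>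
  S.cyl_subset_setOf_forall_lt_iterate_mem _ (S.code_mem_cyl ω (k + 1)) k
    (by simp [word])

/-- On each `Iᵢ = [a, b]`, `T' > 1` off the finitely many fixed points, which are not
isolated in `[a, b]`. -/
lemma one_le_T' {x : ℝ} (hx : x ∈ S.domain) : 1 ≤ S.T' x := by
  obtain ⟨i, hi⟩ := mem_iUnion.1 hx
  obtain ⟨a, b, hab, hIi⟩ := S.hI i
  set s := Ioo a b ∩ (range S.fixPt)ᶜ
  have hxs : x ∈ closure s := by
    have hdense : Dense (range S.fixPt)ᶜ := (finite_range _).countable.dense_compl ℝ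
    rw [hIi, ← closure_Ioo hab.ne] at hi
    exact closure_minimal (hdense.open_subset_closure_inter isOpen_Ioo) isClosed_closure hi
  have hsI : s ⊆ S.I i := hIi ▸ inter_subset_left.trans Ioo_subset_Icc_self
  exact continuousWithinAt_const.closure_le hxs ((S.hT'cont i x hi).mono hsI)
    fun y hy => (S.hexp y (mem_iUnion.2 ⟨i, hsI hy⟩) hy.2).le

lemma log_T'_nonneg {x : ℝ} (hx : x ∈ S.trappedSet) : 0 ≤ Real.log (S.T' x) :=
  Real.log_nonneg (S.one_le_T' (hx 0))

lemma continuousOn_log_T' : ContinuousOn (fun x => Real.log (S.T' x)) S.trappedSet :=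
  (S.continuousOn_T'.mono S.trappedSet_subset_domain).log fun _ hx =>
    (zero_lt_one.trans_le (S.one_le_T' (S.trappedSet_subset_domain hx))).ne'

lemma setOf_log_T'_eq_zero :
    {x ∈ S.trappedSet | Real.log (S.T' x) = 0} = S.parabolicSet := by
  ext x
  constructor
  · rintro ⟨hx, hlog⟩
    have h1 : S.T' x = 1 :=
      Real.eq_one_of_pos_of_log_eq_zero (zero_lt_one.trans_le (S.one_le_T' (hx 0))) hlog
    by_contra hpar
    refine (S.hexp x (hx 0) ?_).ne' h1
    rintro ⟨i, rfl⟩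
    exact hpar ⟨i, rfl, h1⟩
  · rintro ⟨i, rfl, h1⟩
    exact ⟨S.fixPt_mem_trappedSet i, by rw [h1, Real.log_one]⟩

lemma parabolicSet_finite : S.parabolicSet.Finite :=
  (finite_range S.fixPt).subset fun _ ⟨i, hi, _⟩ => ⟨i, hi.symm⟩

theorem mem_convexHull_parabolicSet_of_tendsto_birkhoff {E : Type*} [AddCommGroup E]
    [TopologicalSpace E] [T2Space E] [Module ℝ E] [IsTopologicalAddGroup E]
    [ContinuousSMul ℝ E] [LocallyConvexSpace ℝ E] {F : ℝ → E}
    (hF : ContinuousOn F S.attractor) (ω : SymbSp m) {n : ℕ → ℕ} (hn : Tendsto n atTop atTop)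
    {β : E} (hg : Tendsto (fun j => birkhoff shift S.g (n j) ω) atTop (𝓝 0))
    (hf : Tendsto (fun j => birkhoff shift (F ∘ S.code) (n j) ω) atTop (𝓝 β)) :
    β ∈ convexHull ℝ (F '' S.parabolicSet) := by
  rw [← S.setOf_log_T'_eq_zero]
  -- `hg` and `hf` fit as they stand: `birkhoff = birkhoffAverage ℝ` and `S.g = (log ∘ T') ∘ Π`
  -- hold definitionally.
  refine mem_convexHull_of_tendsto_birkhoffAverage S.isCompact_trappedSet
    (fun k => S.code_mem_trappedSet _) S.continuousOn_log_T'
    (hF.mono S.trappedSet_subset_attractor) (fun _ => S.log_T'_nonneg) ?_ hn hg hf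
  rw [S.setOf_log_T'_eq_zero]
  exact (S.parabolicSet_finite.image F).isCompact_convexHull (𝕜 := ℝ) |>.isClosed

end PCSystem

/-- **Lemma 7 (Statement 10).** If `A_{n_j} g(ω) → 0` along a subsequence and
`A_{n_j} f(ω)` converges (where `f = F ∘ Π`), the limit lies in
`A = Co{F(x) : x parabolic}`; in particular this holds when
`liminf_n A_n g(ω) = 0` and `lim_n A_n f(ω)` exists. -/
theorem statement10 {m d : ℕ} (S : PCSystem m)
    (F : ℝ → EuclideanSpace ℝ (Fin d)) (hF : ContinuousOn F S.attractor)
    (ω : SymbSp m) :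
    (∀ n : ℕ → ℕ, StrictMono n → ∀ β : EuclideanSpace ℝ (Fin d),
        Tendsto (fun j => birkhoff shift S.g (n j) ω) atTop (𝓝 0) →
        Tendsto (fun j => birkhoff shift (F ∘ S.code) (n j) ω) atTop (𝓝 β) →
        β ∈ convexHull ℝ (F '' S.parabolicSet)) ∧
    (atTop.liminf (fun n => birkhoff shift S.g n ω) = 0 →
      ∀ β : EuclideanSpace ℝ (Fin d),
        Tendsto (fun n => birkhoff shift (F ∘ S.code) n ω) atTop (𝓝 β) →
        β ∈ convexHull ℝ (F '' S.parabolicSet)) := by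
  refine ⟨fun n hn β => S.mem_convexHull_parabolicSet_of_tendsto_birkhoff hF ω hn.tendsto_atTop,
    fun hlim β hf => ?_⟩
  obtain ⟨C, hC⟩ := S.isCompact_trappedSet.exists_bound_of_continuousOn S.continuousOn_log_T'
  obtain ⟨n, hn, hgn⟩ := exists_tendsto_birkhoffAverage_liminf (ψ := S.g) fun k => by
    rw [← Real.norm_eq_abs]
    exact hC _ (S.code_mem_trappedSet _)
  exact S.mem_convexHull_parabolicSet_of_tendsto_birkhoff hF ω hn (hlim ▸ hgn) (hf.comp hn)
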